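/- arXiv:2507.19116 — 3 statements merged into one kernel-verified Lean document; each statement's English description precedes it below -/
import Mathlib

section
/- Let Θ be a p×p symmetric positive definite matrix with σ² < 1/‖Θ‖. Suppose indices i ≠ j satisfy Θ^m_{ij} = 0 for all m = 1,…,k but Θ^{k+1}_{ij} ≠ 0 (where Θ^m denotes the m-th matrix power). Then for all sufficiently small σ > 0, the (i,j) entry of (Θ⁻¹ + σ²I)⁻¹ is nonzero. -/
/-!
Since `(Θ⁻¹ + t I)⁻¹ = (1 + t Θ)⁻¹ Θ`, truncating the Neumann series of `(1 + t Θ)⁻¹` after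
`k + 1` terms writes the `(i, j)` entry as `(-t)^k ((Θ^(k+1))_ij - t g(t))`, where
`g(t) = ((1 + t Θ)⁻¹ Θ^(k+2))_ij` is continuous at `0`. The bracket tends to
`(Θ^(k+1))_ij ≠ 0`, so the entry is nonzero for all small `t ≠ 0`, in particular for `t = σ²`.
-/

open Matrix Filter Topology Finset

namespace Matrix

variable {n R : Type*} [Fintype n] [DecidableEq n]

theorem sum_smul_pow_succ_apply_of_pow_apply_eq_zero [CommRing R] {A : Matrix n n R} {i j : n}
    {k : ℕ} (hvanish : ∀ m, 1 ≤ m → m ≤ k → (A ^ m) i j = 0) (s : R) :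
    (∑ m ∈ range (k + 1), s ^ m • A ^ (m + 1)) i j = s ^ k * (A ^ (k + 1)) i j := by
  rw [sum_apply, sum_eq_single_of_mem k (self_mem_range_succ k), smul_apply, smul_eq_mul]
  intro m hm hne
  have hmk : m + 1 ≤ k := by grind
  rw [smul_apply, hvanish (m + 1) (by omega) hmk, smul_zero]

theorem inv_one_add_smul_mul_eq_sum_add [CommRing R] (A : Matrix n n R) (t : R)
    (h : IsUnit (1 + t • A).det) (k : ℕ) :
    (1 + t • A)⁻¹ * A = ∑ m ∈ range (k + 1), (-t) ^ m • A ^ (m + 1) +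
      (-t) ^ (k + 1) • ((1 + t • A)⁻¹ * A ^ (k + 2)) := by
  have hgeom :
      (1 + t • A) * ∑ m ∈ range (k + 1), ((-t) • A) ^ m = 1 - ((-t) • A) ^ (k + 1) := by
    rw [← mul_neg_geom_sum, neg_smul, sub_neg_eq_add]
  have hsum : (∑ m ∈ range (k + 1), ((-t) • A) ^ m) * A =
      ∑ m ∈ range (k + 1), (-t) ^ m • A ^ (m + 1) := by
    simp only [sum_mul, smul_pow, smul_mul_assoc, ← pow_succ]
  calc (1 + t • A)⁻¹ * A
      = (1 + t • A)⁻¹ * ((1 - ((-t) • A) ^ (k + 1)) + ((-t) • A) ^ (k + 1)) * A := by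
        rw [sub_add_cancel, Matrix.mul_one]
    _ = _ := by
        rw [← hgeom, mul_add, ← Matrix.mul_assoc, nonsing_inv_mul _ h, Matrix.one_mul, add_mul,
          hsum, smul_pow, Matrix.mul_smul, smul_mul_assoc, Matrix.mul_assoc, ← pow_succ]

theorem inv_add_smul_one [CommRing R] {A : Matrix n n R} (hA : IsUnit A.det) (t : R) :
    (A⁻¹ + t • 1)⁻¹ = (1 + t • A)⁻¹ * A := by
  rw [show A⁻¹ + t • 1 = A⁻¹ * (1 + t • A) by
    rw [mul_add, mul_one, mul_smul_comm, nonsing_inv_mul _ hA], mul_inv_rev,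
    nonsing_inv_nonsing_inv _ hA]

theorem eventually_inv_add_smul_one_apply_ne_zero {𝕜 : Type*} [NormedField 𝕜]
    {A : Matrix n n 𝕜} (hA : IsUnit A.det) {i j : n} {k : ℕ}
    (hvanish : ∀ m, 1 ≤ m → m ≤ k → (A ^ m) i j = 0) (hnonzero : (A ^ (k + 1)) i j ≠ 0) :
    ∀ᶠ t in 𝓝[≠] (0 : 𝕜), (A⁻¹ + t • 1)⁻¹ i j ≠ 0 := by
  have hcont : Continuous fun t : 𝕜 => 1 + t • A := by fun_prop
  have hdet : ∀ᶠ t in 𝓝 (0 : 𝕜), IsUnit (1 + t • A).det := by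
    have : Tendsto (fun t : 𝕜 => (1 + t • A).det) (𝓝 0) (𝓝 1) := by
      simpa using hcont.matrix_det.tendsto 0
    filter_upwards [this.eventually_ne one_ne_zero] with t ht using ht.isUnit
  have hinv : ContinuousAt (fun t : 𝕜 => (1 + t • A)⁻¹) 0 := by
    refine ContinuousAt.comp (f := fun t : 𝕜 => 1 + t • A) ?_ hcont.continuousAt
    apply continuousAt_matrix_inv
    rw [zero_smul, add_zero, det_one, Ring.inverse_eq_inv']
    exact continuousAt_inv₀ one_ne_zero
  have hlim : Tendsto (fun t : 𝕜 => (A ^ (k + 1)) i j - t * ((1 + t • A)⁻¹ * A ^ (k + 2)) i j)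
      (𝓝 0) (𝓝 ((A ^ (k + 1)) i j)) := by
    have : ContinuousAt
        (fun t : 𝕜 => (A ^ (k + 1)) i j - t * ((1 + t • A)⁻¹ * A ^ (k + 2)) i j) 0 := by
      fun_prop
    simpa using this.tendsto
  filter_upwards [self_mem_nhdsWithin, nhdsWithin_le_nhds (hlim.eventually_ne hnonzero),
    nhdsWithin_le_nhds hdet] with t ht hne hunit
  rw [inv_add_smul_one hA, inv_one_add_smul_mul_eq_sum_add A t hunit k, add_apply,
    sum_smul_pow_succ_apply_of_pow_apply_eq_zero hvanish, smul_apply, smul_eq_mul]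
  convert mul_ne_zero (pow_ne_zero k (neg_ne_zero.2 ht)) hne using 1
  ring

end Matrix

theorem entry_nonzero_of_small_noise_general {p : ℕ} (Θ : Matrix (Fin p) (Fin p) ℝ)
    (hΘpd : Θ.PosDef)
    (N : Matrix (Fin p) (Fin p) ℝ → ℝ)
    (hN_nonneg : ∀ A, 0 ≤ N A)
    (hN_eq_zero : ∀ A, N A = 0 ↔ A = 0)
    (i j : Fin p) (k : ℕ)
    (hvanish : ∀ m : ℕ, 1 ≤ m → m ≤ k → (Θ ^ m) i j = 0)
    (hnonzero : (Θ ^ (k + 1)) i j ≠ 0) :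
    ∃ σ₀ : ℝ, 0 < σ₀ ∧ ∀ σ : ℝ, 0 < σ → σ < σ₀ →
      σ ^ 2 < 1 / N Θ ∧
        ((Θ⁻¹ + (σ ^ 2) • (1 : Matrix (Fin p) (Fin p) ℝ))⁻¹) i j ≠ 0 := by
  have hΘ : Θ ≠ 0 := by rintro rfl; simp at hnonzero
  have hNΘ : 0 < N Θ := (hN_nonneg Θ).lt_of_ne' (mt (hN_eq_zero Θ).1 hΘ)
  have hsq : Tendsto (fun σ : ℝ => σ ^ 2) (𝓝[>] 0) (𝓝[≠] 0) := by
    refine tendsto_nhdsWithin_iff.2 ⟨?_, ?_⟩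
    · exact ((continuous_pow 2).tendsto' 0 0 (zero_pow two_ne_zero)).mono_left
        nhdsWithin_le_nhds
    · filter_upwards [self_mem_nhdsWithin] with σ hσ using pow_ne_zero 2 (ne_of_gt hσ)
  have hsmall : ∀ᶠ σ in 𝓝[>] (0 : ℝ), σ ^ 2 < 1 / N Θ :=
    (hsq.mono_right nhdsWithin_le_nhds).eventually (eventually_lt_nhds (by positivity))
  have hentry := hsq.eventually <| Matrix.eventually_inv_add_smul_one_apply_ne_zero
    (isUnit_iff_isUnit_det Θ |>.1 hΘpd.isUnit) hvanish hnonzero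
  obtain ⟨σ₀, hσ₀, hsub⟩ := mem_nhdsGT_iff_exists_Ioo_subset.1 (hsmall.and hentry)
  exact ⟨σ₀, hσ₀, fun σ hσ hσσ₀ => hsub ⟨hσ, hσσ₀⟩⟩

/-- if all powers `Θ^m` for `1 ≤ m ≤ k` vanish at `(i,j)` but `Θ^(k+1)`
does not, then for all sufficiently small `σ > 0` the `(i,j)` entry of
`(Θ⁻¹ + σ²I)⁻¹` is nonzero. -/
theorem entry_nonzero_of_small_noise {p : ℕ} (Θ : Matrix (Fin p) (Fin p) ℝ)
    (hΘsymm : Θ.IsSymm) (hΘpd : Θ.PosDef)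
    (N : Matrix (Fin p) (Fin p) ℝ → ℝ)
    (hN_nonneg : ∀ A, 0 ≤ N A)
    (hN_eq_zero : ∀ A, N A = 0 ↔ A = 0)
    (hN_add : ∀ A B, N (A + B) ≤ N A + N B)
    (hN_smul : ∀ (c : ℝ) A, N (c • A) = |c| * N A)
    (hN_submul : ∀ A B, N (A * B) ≤ N A * N B)
    (i j : Fin p) (hij : i ≠ j) (k : ℕ)
    (hvanish : ∀ m : ℕ, 1 ≤ m → m ≤ k → (Θ ^ m) i j = 0)
    (hnonzero : (Θ ^ (k + 1)) i j ≠ 0) :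
    ∃ σ₀ : ℝ, 0 < σ₀ ∧ ∀ σ : ℝ, 0 < σ → σ < σ₀ →
      σ ^ 2 < 1 / N Θ ∧
        ((Θ⁻¹ + (σ ^ 2) • (1 : Matrix (Fin p) (Fin p) ℝ))⁻¹) i j ≠ 0 :=
  entry_nonzero_of_small_noise_general Θ hΘpd N hN_nonneg hN_eq_zero i j k hvanish hnonzero
end

section
/- For every ε ≥ 0 and μ > 0, define δ(ε) = Φ(−ε/μ + μ/2) − e^ε Φ(−ε/μ − μ/2). Then δ(ε) ∈ [0,1], δ is non-increasing in ε, and δ(ε) → 0 as ε → ∞. -/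
/-!
With `φ_m` the density of `N(m, 1)`, `δ(ε) = ∫ (φ_0 - e^ε φ_μ)⁺`: the likelihood ratio
`φ_μ / φ_0 = exp (μ t - μ² / 2)` is increasing, so the integrand is positive exactly on
`t ≤ -ε / μ + μ / 2`, and integrating there gives the two `Φ` terms. In this form `δ` is
visibly nonnegative and non-increasing in `ε`, and it is squeezed between `0` and
`Φ (-ε / μ + μ / 2)`, which is at most `1` and tends to `0`.
-/

open MeasureTheory ProbabilityTheory Filter

/-- Standard normal CDF. -/
noncomputable def Phi (x : ℝ) : ℝ := ((gaussianReal 0 1) (Set.Iic x)).toReal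

/-- The privacy profile `δ(ε)` implied by `μ`-GDP. -/
noncomputable def deltaGDP (μ ε : ℝ) : ℝ :=
  Phi (-ε / μ + μ / 2) - Real.exp ε * Phi (-ε / μ - μ / 2)

lemma Phi_nonneg (x : ℝ) : 0 ≤ Phi x := ENNReal.toReal_nonneg

lemma Phi_eq_cdf : Phi = cdf (gaussianReal 0 1) :=
  funext fun x => (cdf_eq_real _ x).symm

lemma Phi_le_one (x : ℝ) : Phi x ≤ 1 :=
  Phi_eq_cdf ▸ cdf_le_one _ x

lemma tendsto_Phi_atBot : Tendsto Phi atBot (nhds 0) :=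
  Phi_eq_cdf ▸ tendsto_cdf_atBot _

lemma Phi_sub_eq_setIntegral (c m : ℝ) :
    Phi (c - m) = ∫ t in Set.Iic c, gaussianPDFReal m 1 t := by
  have hshift : gaussianReal 0 1 (Set.Iic (c - m)) = gaussianReal m 1 (Set.Iic c) := by
    have hmap := gaussianReal_map_add_const (μ := 0) (v := 1) m
    rw [zero_add] at hmap
    rw [← hmap, Measure.map_apply (measurable_add_const m) measurableSet_Iic]
    congr 1
    ext t
    simp [le_sub_iff_add_le]
  rw [Phi, hshift, gaussianReal_apply_eq_integral m one_ne_zero,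
    ENNReal.toReal_ofReal (setIntegral_nonneg measurableSet_Iic
      fun t _ => gaussianPDFReal_nonneg m 1 t)]

lemma exp_mul_gaussianPDFReal_le_iff {μ : ℝ} (hμ : 0 < μ) (ε t : ℝ) :
    Real.exp ε * gaussianPDFReal μ 1 t ≤ gaussianPDFReal 0 1 t ↔ t ≤ -ε / μ + μ / 2 := by
  have hthreshold : -ε / μ + μ / 2 = (μ ^ 2 / 2 - ε) / μ := by field_simp; ring
  simp only [gaussianPDFReal, NNReal.coe_one, mul_one, sub_zero]
  rw [mul_left_comm, ← Real.exp_add, mul_le_mul_iff_right₀ (by positivity), Real.exp_le_exp,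
    hthreshold, le_div_iff₀' hμ]
  constructor <;> intro h <;> linarith

lemma deltaGDP_eq_integral_posPart {μ : ℝ} (hμ : 0 < μ) (ε : ℝ) :
    deltaGDP μ ε = ∫ t, max (gaussianPDFReal 0 1 t - Real.exp ε * gaussianPDFReal μ 1 t) 0 := by
  have hposPart : (fun t => max (gaussianPDFReal 0 1 t - Real.exp ε * gaussianPDFReal μ 1 t) 0)
      = (Set.Iic (-ε / μ + μ / 2)).indicator
          (fun t => gaussianPDFReal 0 1 t - Real.exp ε * gaussianPDFReal μ 1 t) := by
    ext t
    by_cases ht : t ≤ -ε / μ + μ / 2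
    · simp [Set.indicator_of_mem (Set.mem_Iic.2 ht),
        (exp_mul_gaussianPDFReal_le_iff hμ ε t).2 ht]
    · simp [Set.indicator_of_notMem (mt Set.mem_Iic.1 ht),
        le_of_not_ge (mt (exp_mul_gaussianPDFReal_le_iff hμ ε t).1 ht)]
  rw [deltaGDP, show -ε / μ - μ / 2 = -ε / μ + μ / 2 - μ by ring,
    hposPart, integral_indicator measurableSet_Iic,
    integral_sub (integrable_gaussianPDFReal 0 1).integrableOn
      ((integrable_gaussianPDFReal μ 1).const_mul _).integrableOn,
    integral_const_mul, ← Phi_sub_eq_setIntegral, ← Phi_sub_eq_setIntegral,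
    sub_zero]

lemma deltaGDP_nonneg {μ : ℝ} (hμ : 0 < μ) (ε : ℝ) : 0 ≤ deltaGDP μ ε := by
  rw [deltaGDP_eq_integral_posPart hμ]
  exact integral_nonneg fun t => le_max_right _ _

lemma deltaGDP_le_Phi (μ ε : ℝ) : deltaGDP μ ε ≤ Phi (-ε / μ + μ / 2) :=
  sub_le_self _ (mul_nonneg (Real.exp_pos ε).le (Phi_nonneg _))

lemma deltaGDP_antitone {μ : ℝ} (hμ : 0 < μ) : Antitone (deltaGDP μ) := by
  intro ε₁ ε₂ h
  have hint (ε : ℝ) : Integrable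
      (fun t => max (gaussianPDFReal 0 1 t - Real.exp ε * gaussianPDFReal μ 1 t) 0) :=
    ((integrable_gaussianPDFReal 0 1).sub
      ((integrable_gaussianPDFReal μ 1).const_mul _)).sup (integrable_zero _ _ _)
  rw [deltaGDP_eq_integral_posPart hμ, deltaGDP_eq_integral_posPart hμ]
  refine integral_mono (hint ε₂) (hint ε₁) fun t => max_le_max_right _ (sub_le_sub_left ?_ _)
  exact mul_le_mul_of_nonneg_right (Real.exp_le_exp.2 h) (gaussianPDFReal_nonneg μ 1 t)

/-- basic properties of the GDP privacy profile `δ(ε)`: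
it takes values in `[0,1]`, is non-increasing in `ε`, and tends to `0` as `ε → ∞`. -/
theorem deltaGDP_properties (μ : ℝ) (hμ : 0 < μ) :
    (∀ ε : ℝ, 0 ≤ ε → deltaGDP μ ε ∈ Set.Icc (0 : ℝ) 1) ∧
    (∀ ε₁ ε₂ : ℝ, 0 ≤ ε₁ → ε₁ ≤ ε₂ → deltaGDP μ ε₂ ≤ deltaGDP μ ε₁) ∧
    Tendsto (deltaGDP μ) atTop (nhds 0) := by
  have hthreshold : Tendsto (fun ε : ℝ => -ε / μ + μ / 2) atTop atBot := by
    refine tendsto_atBot_add_const_right _ _ ?_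
    simpa only [neg_div, id_eq] using tendsto_neg_atBot_iff.2 (tendsto_id.atTop_div_const hμ)
  refine ⟨fun ε _ => ⟨deltaGDP_nonneg hμ ε, (deltaGDP_le_Phi μ ε).trans (Phi_le_one _)⟩,
    fun _ _ _ h => deltaGDP_antitone hμ h, ?_⟩
  exact tendsto_of_tendsto_of_tendsto_of_le_of_le tendsto_const_nhds
    (tendsto_Phi_atBot.comp hthreshold) (deltaGDP_nonneg hμ) (deltaGDP_le_Phi μ)
end

section
/- Let X ~ N_ℤ(0, σ²) be the discrete Gaussian on ℤ. Then Var[X] ≤ σ²(1 − 4π²σ²/(e^{4π²σ²} − 1)) < σ². -/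
/-!
Put `t = 1/(2σ²)` and `Θ(t) = ∑ₙ e^{-tn²}`, so that the variance is `V(t) = -Θ'(t)/Θ(t)`.
Differentiating the Poisson summation identity `√t Θ(t) = √π Θ(π²/t)` gives
`V(t) = 1/(2t) - (π²/t²) V(π²/t)`, and with it the claimed bound becomes
`V(s) ≥ 1/(e^{2s} - 1)` for the dual parameter `s = π²/t`. When `s ≥ 2` this follows from
`V(s) ≥ 2e^{-s}/Θ(s)` and `Θ(s) ≤ 2`. Otherwise `t > 4`, and `V(t)` itself is exponentially
small, below `π²/(2t(t + π²))`, which beats the bound through `1 - x/(eˣ - 1) ≥ x/(2 + x)`.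
-/

open Real

variable {t : ℝ}

lemma summable_abs_pow_mul_exp_neg_mul_sq (ht : 0 < t) (k : ℕ) :
    Summable fun n : ℤ ↦ |(n : ℝ)| ^ k * exp (-t * n ^ 2) := by
  refine (summable_pow_mul_jacobiTheta₂_term_bound 0 (div_pos ht pi_pos) k).congr fun n ↦ ?_
  rw [Int.cast_abs]
  congr 2
  field_simp
  ring

lemma summable_exp_neg_mul_sq (ht : 0 < t) : Summable fun n : ℤ ↦ exp (-t * n ^ 2) := by
  simpa using summable_abs_pow_mul_exp_neg_mul_sq ht 0

lemma summable_sq_mul_exp_neg_mul_sq (ht : 0 < t) :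
    Summable fun n : ℤ ↦ (n : ℝ) ^ 2 * exp (-t * n ^ 2) := by
  simpa using summable_abs_pow_mul_exp_neg_mul_sq ht 2

lemma hasSum_exp_neg_mul_succ (ht : 0 < t) :
    HasSum (fun n : ℕ ↦ exp (-t * (n + 1))) (exp t - 1)⁻¹ := by
  have hq : exp (-t) < 1 := exp_lt_one_iff.mpr (neg_lt_zero.mpr ht)
  have hterm : (fun n : ℕ ↦ exp (-t * (n + 1))) = fun n ↦ exp (-t) * exp (-t) ^ n := by
    ext n
    rw [← exp_nat_mul, ← exp_add]
    ring_nf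
  have hsum : (exp t - 1)⁻¹ = exp (-t) * (1 - exp (-t))⁻¹ := by
    rw [exp_neg]
    field_simp [(one_lt_exp_iff.mpr ht).ne']
  rw [hterm, hsum]
  exact (hasSum_geometric_of_lt_one (exp_pos _).le hq).mul_left _

lemma tsum_le_of_even_of_le_exp {f : ℤ → ℝ} (ht : 0 < t) (heven : f.Even) (hf : Summable f)
    (hle : ∀ n : ℕ, f (n + 1) ≤ exp (-t * (n + 1))) :
    ∑' n, f n ≤ f 0 + 2 * (exp t - 1)⁻¹ := by
  rw [tsum_int_eq_zero_add_two_mul_tsum_pnat heven hf,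
    tsum_pnat_eq_tsum_succ (f := fun n : ℕ ↦ f n), ← (hasSum_exp_neg_mul_succ ht).tsum_eq,
    nsmul_eq_mul, Nat.cast_ofNat]
  gcongr
  · exact hf.comp_injective fun a b h ↦ by simpa using h
  · exact (hasSum_exp_neg_mul_succ ht).summable
  · exact_mod_cast hle _

lemma sq_mul_exp_neg_mul_sq_le {x : ℝ} (ht : 2 ≤ t) (hx : 1 ≤ x) :
    x ^ 2 * exp (-t * x ^ 2) ≤ exp (-t * x) := by
  have hsq : x ^ 2 ≤ exp (t * (x ^ 2 - x)) := by
    nlinarith [add_one_le_exp (t * (x ^ 2 - x)), mul_le_mul_of_nonneg_right ht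
      (by nlinarith : (0 : ℝ) ≤ x ^ 2 - x)]
  calc x ^ 2 * exp (-t * x ^ 2) ≤ exp (t * (x ^ 2 - x)) * exp (-t * x ^ 2) := by gcongr
    _ = exp (-t * x) := by rw [← exp_add]; ring_nf

lemma div_two_add_le_one_sub_div_exp_sub_one {x : ℝ} (hx : 0 < x) :
    x / (2 + x) ≤ 1 - x / (exp x - 1) := by
  have hexp := quadratic_le_exp_of_nonneg hx.le
  have hbound : x / (exp x - 1) ≤ 2 / (2 + x) := by
    rw [div_le_div_iff₀ (by nlinarith) (by linarith)]
    nlinarith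
  have hsplit : x / (2 + x) = 1 - 2 / (2 + x) := by
    field_simp
    ring
  linarith

namespace DiscreteGaussian

noncomputable def theta (t : ℝ) : ℝ := ∑' n : ℤ, exp (-t * n ^ 2)

noncomputable def thetaMoment (t : ℝ) : ℝ := ∑' n : ℤ, (n : ℝ) ^ 2 * exp (-t * n ^ 2)

/-- The variance of `N_ℤ(0, σ²)` with `t = 1/(2σ²)`. -/
noncomputable def variance (t : ℝ) : ℝ := thetaMoment t / theta t

lemma one_le_theta (ht : 0 < t) : 1 ≤ theta t := by
  have := (summable_exp_neg_mul_sq ht).le_tsum 0 fun n _ ↦ (exp_pos _).le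
  simpa [theta] using this

lemma theta_le (ht : 0 < t) : theta t ≤ 1 + 2 * (exp t - 1)⁻¹ := by
  have := tsum_le_of_even_of_le_exp ht (f := fun n : ℤ ↦ exp (-t * n ^ 2))
    (fun n ↦ by simp) (summable_exp_neg_mul_sq ht) fun n ↦ by
      have hn : (0 : ℝ) ≤ n := n.cast_nonneg
      push_cast
      exact exp_le_exp.mpr <| by
        nlinarith [mul_nonneg (mul_nonneg ht.le hn) (by linarith : (0 : ℝ) ≤ n + 1)]
  simpa [theta] using this

lemma thetaMoment_nonneg : 0 ≤ thetaMoment t :=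
  tsum_nonneg fun n ↦ by positivity

lemma two_mul_exp_neg_le_thetaMoment (ht : 0 < t) : 2 * exp (-t) ≤ thetaMoment t := by
  have := (summable_sq_mul_exp_neg_mul_sq ht).sum_le_tsum {1, -1} fun n _ ↦ by positivity
  rw [Finset.sum_pair (by decide)] at this
  norm_num at this
  rw [two_mul]
  simpa [thetaMoment] using this

lemma thetaMoment_le (ht : 2 ≤ t) : thetaMoment t ≤ 2 * (exp t - 1)⁻¹ := by
  have := tsum_le_of_even_of_le_exp (by positivity)
    (f := fun n : ℤ ↦ (n : ℝ) ^ 2 * exp (-t * n ^ 2))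
    (fun n ↦ by simp) (summable_sq_mul_exp_neg_mul_sq (by positivity)) fun n ↦ by
      push_cast
      exact sq_mul_exp_neg_mul_sq_le ht (by linarith [(n.cast_nonneg : (0 : ℝ) ≤ n)])
  simpa [thetaMoment] using this

lemma sqrt_mul_theta (ht : 0 < t) : √t * theta t = √π * theta (π ^ 2 / t) := by
  have h := tsum_exp_neg_mul_int_sq (div_pos ht pi_pos)
  simp only [theta]
  convert congrArg (√t * ·) h using 1
  · congr 1
    refine tsum_congr fun n ↦ ?_
    field_simp
  · rw [← sqrt_eq_rpow, sqrt_div ht.le, show -π / (t / π) = -(π ^ 2 / t) by field_simp]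
    field_simp

lemma hasDerivAt_theta (ht : 0 < t) : HasDerivAt theta (-thetaMoment t) t := by
  have hderiv (n : ℤ) (y : ℝ) : HasDerivAt (fun z : ℝ ↦ exp (-z * n ^ 2))
      (-((n : ℝ) ^ 2 * exp (-y * n ^ 2))) y := by
    have hlin : HasDerivAt (fun z : ℝ ↦ -z * n ^ 2) (-n ^ 2) y := by
      simpa using (hasDerivAt_neg y).mul_const ((n : ℝ) ^ 2)
    convert hlin.exp using 1
    ring
  have hbound (n : ℤ) (y : ℝ) (hy : y ∈ Set.Ioi (t / 2)) :
      ‖-((n : ℝ) ^ 2 * exp (-y * n ^ 2))‖ ≤ (n : ℝ) ^ 2 * exp (-(t / 2) * n ^ 2) := by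
    rw [norm_neg, norm_of_nonneg (by positivity)]
    gcongr
    exact hy.le
  have hmem : t ∈ Set.Ioi (t / 2) := half_lt_self ht
  have := hasDerivAt_tsum_of_isPreconnected (summable_sq_mul_exp_neg_mul_sq (half_pos ht))
    isOpen_Ioi isPreconnected_Ioi (fun n y _ ↦ hderiv n y) hbound hmem
    (summable_exp_neg_mul_sq ht) hmem
  rwa [tsum_neg] at this

lemma variance_eq_inv_two_mul_sub (ht : 0 < t) :
    variance t = (2 * t)⁻¹ - π ^ 2 / t ^ 2 * variance (π ^ 2 / t) := by
  have hs : 0 < π ^ 2 / t := by positivity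
  have hlhs : HasDerivAt (fun y ↦ √y * theta y)
      (1 / (2 * √t) * theta t + √t * -thetaMoment t) t :=
    (hasDerivAt_sqrt ht.ne').mul (hasDerivAt_theta ht)
  have hdual : HasDerivAt (fun y ↦ π ^ 2 / y) (-(π ^ 2 / t ^ 2)) t := by
    simpa [div_eq_mul_inv] using (hasDerivAt_inv ht.ne').const_mul (π ^ 2)
  have hrhs : HasDerivAt (fun y ↦ √π * theta (π ^ 2 / y))
      (√π * (-thetaMoment (π ^ 2 / t) * -(π ^ 2 / t ^ 2))) t :=
    ((hasDerivAt_theta hs).comp t hdual).const_mul √π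
  have hderiv := hlhs.unique <| hrhs.congr_of_eventuallyEq <|
    Filter.eventually_of_mem (Ioi_mem_nhds ht) fun y hy ↦ sqrt_mul_theta hy
  have hθ : theta t ≠ 0 := (zero_lt_one.trans_le (one_le_theta ht)).ne'
  have hst : √t ^ 2 = t := sq_sqrt ht.le
  calc variance t
      = (2 * t)⁻¹ - (1 / (2 * √t) * theta t + √t * -thetaMoment t) /
          (√t * theta t) := by
        rw [variance]
        field_simp
        rw [hst]
        ring
    _ = (2 * t)⁻¹ - √π * (-thetaMoment (π ^ 2 / t) * -(π ^ 2 / t ^ 2)) /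
          (√π * theta (π ^ 2 / t)) := by
        rw [hderiv, sqrt_mul_theta ht]
    _ = (2 * t)⁻¹ - π ^ 2 / t ^ 2 * variance (π ^ 2 / t) := by
        rw [variance]
        field_simp

lemma inv_exp_two_mul_sub_one_le_variance (ht : 2 ≤ t) :
    (exp (2 * t) - 1)⁻¹ ≤ variance t := by
  have ht0 : 0 < t := by linarith
  have he : 3 ≤ exp t := by linarith [add_one_le_exp t]
  have hG : theta t ≤ 2 := by
    have hinv : 2 * (exp t - 1)⁻¹ ≤ 1 := by
      rw [← div_eq_mul_inv, div_le_one (by linarith)]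
      linarith
    linarith [theta_le ht0]
  calc (exp (2 * t) - 1)⁻¹ ≤ exp (-t) := by
        rw [exp_neg, two_mul, exp_add]
        exact inv_anti₀ (by positivity) (by nlinarith)
    _ = 2 * exp (-t) / 2 := by ring
    _ ≤ variance t :=
        div_le_div₀ thetaMoment_nonneg (two_mul_exp_neg_le_thetaMoment ht0)
          (zero_lt_one.trans_le (one_le_theta ht0)) hG

lemma variance_le_of_four_le (ht : 4 ≤ t) :
    variance t ≤ π ^ 2 / (2 * t * (t + π ^ 2)) := by
  have hπ : 9 ≤ π ^ 2 := by nlinarith [pi_gt_three]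
  have hexp : 1 + t + t ^ 2 / 2 + t ^ 3 / 6 + t ^ 4 / 24 ≤ exp t := by
    simpa [Finset.sum_range_succ, Nat.factorial] using sum_le_exp_of_nonneg (by linarith) 5
  have hcube : 16 * t ≤ t ^ 3 := by nlinarith
  have hpoly : 4 * t ^ 2 / 9 ≤ exp t - 1 - 4 * t := by
    nlinarith [pow_nonneg (by linarith : 0 ≤ t) 4]
  calc variance t ≤ thetaMoment t :=
        div_le_self thetaMoment_nonneg (one_le_theta (by linarith))
    _ ≤ 2 * (exp t - 1)⁻¹ := thetaMoment_le (by linarith)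
    _ ≤ π ^ 2 / (2 * t * (t + π ^ 2)) := by
        rw [← div_eq_mul_inv, div_le_div_iff₀ (by nlinarith) (by positivity)]
        nlinarith [mul_le_mul_of_nonneg_right hπ (by nlinarith : 0 ≤ exp t - 1 - 4 * t)]

theorem variance_le (ht : 0 < t) :
    variance t ≤ (2 * t)⁻¹ * (1 - (2 * π ^ 2 / t) / (exp (2 * π ^ 2 / t) - 1)) := by
  rcases le_total t 4 with ht4 | ht4
  · have hs : 2 ≤ π ^ 2 / t := by
      rw [le_div_iff₀ ht]
      nlinarith [pi_gt_three]
    have hdual := inv_exp_two_mul_sub_one_le_variance hs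
    rw [← mul_div_assoc] at hdual
    have hrhs : (2 * t)⁻¹ * (1 - (2 * π ^ 2 / t) / (exp (2 * π ^ 2 / t) - 1)) =
        (2 * t)⁻¹ - π ^ 2 / t ^ 2 * (exp (2 * π ^ 2 / t) - 1)⁻¹ := by
      field_simp
    rw [variance_eq_inv_two_mul_sub ht, hrhs]
    gcongr
  · have hx : 0 < 2 * π ^ 2 / t := by positivity
    calc variance t ≤ π ^ 2 / (2 * t * (t + π ^ 2)) := variance_le_of_four_le ht4
      _ = (2 * t)⁻¹ * ((2 * π ^ 2 / t) / (2 + 2 * π ^ 2 / t)) := by field_simp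
      _ ≤ _ := by
          gcongr
          exact div_two_add_le_one_sub_div_exp_sub_one hx

end DiscreteGaussian

open DiscreteGaussian

/-- the variance of the discrete Gaussian `N_ℤ(0, σ²)` is at most
`σ²(1 − 4π²σ²/(e^{4π²σ²} − 1))`, which is strictly less than `σ²`. -/
theorem discreteGaussian_variance_lt (σ : ℝ) (hσ : 0 < σ) :
    (∑' x : ℤ, (x : ℝ) ^ 2 * Real.exp (-(x : ℝ) ^ 2 / (2 * σ ^ 2))) /
        (∑' y : ℤ, Real.exp (-(y : ℝ) ^ 2 / (2 * σ ^ 2))) ≤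
      σ ^ 2 * (1 - 4 * π ^ 2 * σ ^ 2 / (Real.exp (4 * π ^ 2 * σ ^ 2) - 1)) ∧
    σ ^ 2 * (1 - 4 * π ^ 2 * σ ^ 2 / (Real.exp (4 * π ^ 2 * σ ^ 2) - 1)) < σ ^ 2 := by
  have hexponent (x : ℤ) : -(x : ℝ) ^ 2 / (2 * σ ^ 2) = -(2 * σ ^ 2)⁻¹ * x ^ 2 := by ring
  have hdual : 2 * π ^ 2 / (2 * σ ^ 2)⁻¹ = 4 * π ^ 2 * σ ^ 2 := by field_simp; ring
  have hscale : (2 * (2 * σ ^ 2)⁻¹)⁻¹ = σ ^ 2 := by field_simp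
  have hx : 0 < 4 * π ^ 2 * σ ^ 2 := by positivity
  refine ⟨?_, mul_lt_of_lt_one_right (by positivity) ?_⟩
  · have key := variance_le (by positivity : 0 < (2 * σ ^ 2)⁻¹)
    rw [hdual, hscale] at key
    simpa only [variance, thetaMoment, theta, hexponent] using key
  · have hE : 0 < Real.exp (4 * π ^ 2 * σ ^ 2) - 1 := sub_pos.mpr (one_lt_exp_iff.mpr hx)
    linarith [div_pos hx hE]
end
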